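/- Let Ḡ = (G, ω) be a vertex-weighted graph with genus g(Ḡ) ≥ 2 having a bridge e, and let Ḡ1, Ḡ2 be the two vertex-weighted graphs obtained from the connected components of G ∖ {e} with restricted weights. If Ḡ is hyperelliptic, then each Ḡ_i is either hyperelliptic or has genus at most 1. -/

import Mathlib

/-!
For each side `Ḡᵢ`, collapsing the other side, together with its subdivided loops, onto the
endpoint of the bridge in `Ḡᵢ` is a retraction of `Ḡ•` onto `Ḡᵢ•`. Every edge between different
fibres lies in `Ḡᵢ•`, so pushing divisors forward maps principal divisors to principal divisors
(`push (div f) = div (f ∘ incl)`), and a degree-2 divisor of rank 1 pushes forward to a degree-2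
divisor of rank at least 1 on the side. If that rank were 2, every `[u] - [w]` would be principal;
a function with divisor `[u] - [w]` cuts off a set with at most one leaving edge, so every edge is
a bridge, the virtual loopless graph of the side is a forest, and its genus is at most 0.
-/

open scoped Classical

namespace BN

/-- A finite multigraph: `E u v` is the number of edges (other than loops)
between distinct vertices `u` and `v`, and `loops v` is the number of loops at `v`. -/
structure MultiGraph (V : Type) where
  E : V → V → ℕ
  loops : V → ℕ
  symm : ∀ u v, E u v = E v u
  noDiag : ∀ v, E v v = 0

variable {V V1 V2 : Type}

/-- The divisor `[v]`. -/
def one [DecidableEq V] (v : V) : V → ℤ := fun w => if w = v then 1 else 0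

/-- Degree of a divisor. -/
def deg [Fintype V] (d : V → ℤ) : ℤ := ∑ v, d v

/-- Effective divisor. -/
def Effective (d : V → ℤ) : Prop := ∀ v, 0 ≤ d v

namespace MultiGraph

/-- Divisor of a rational function (loops contribute nothing). -/
def div [Fintype V] (G : MultiGraph V) (f : V → ℤ) : V → ℤ :=
  fun v => ∑ w, (G.E v w : ℤ) * (f w - f v)

def Principal [Fintype V] (G : MultiGraph V) (d : V → ℤ) : Prop :=
  ∃ f : V → ℤ, d = G.div f

def LinEquiv [Fintype V] (G : MultiGraph V) (d d' : V → ℤ) : Prop :=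
  G.Principal (d' - d)

/-- `d` is linearly equivalent to an effective divisor. -/
def Winnable [Fintype V] (G : MultiGraph V) (d : V → ℤ) : Prop :=
  ∃ e : V → ℤ, Effective e ∧ G.LinEquiv d e

/-- The Baker–Norine rank of a divisor. -/
noncomputable def rank [Fintype V] (G : MultiGraph V) (d : V → ℤ) : ℤ :=
  if G.Winnable d then
    (sSup {s : ℕ | ∀ e : V → ℤ, Effective e → deg e = (s : ℤ) → G.Winnable (d - e)} : ℕ)
  else -1

def Connected (G : MultiGraph V) : Prop :=
  ∀ u v : V, Relation.ReflTransGen (fun a b => 0 < G.E a b) u v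

def Loopless (G : MultiGraph V) : Prop := ∀ v, G.loops v = 0

/-- Number of edges from `v` to vertices outside `A`. -/
def outdeg [Fintype V] [DecidableEq V] (G : MultiGraph V) (A : Finset V) (v : V) : ℕ :=
  ∑ w ∈ Finset.univ.filter (fun w => w ∉ A), G.E v w

/-- `v0`-reduced divisor. -/
def Reduced [Fintype V] [DecidableEq V] (G : MultiGraph V) (v0 : V) (d : V → ℤ) : Prop :=
  (∀ v, v ≠ v0 → 0 ≤ d v) ∧
  ∀ A : Finset V, A.Nonempty → v0 ∉ A → ∃ v ∈ A, d v < (G.outdeg A v : ℤ)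

def valence [Fintype V] (G : MultiGraph V) (v : V) : ℕ :=
  (∑ w, G.E v w) + 2 * G.loops v

/-- Canonical divisor. -/
def K [Fintype V] (G : MultiGraph V) : V → ℤ := fun v => (G.valence v : ℤ) - 2

def edgeCount [Fintype V] (G : MultiGraph V) : ℕ :=
  (∑ v, ∑ w, G.E v w) / 2 + ∑ v, G.loops v

end MultiGraph

open MultiGraph

/-- The graph obtained by joining `G1` and `G2` by a single bridge from `v1` to `v2`. -/
def bridgeJoin [DecidableEq V1] [DecidableEq V2]
    (G1 : MultiGraph V1) (G2 : MultiGraph V2) (v1 : V1) (v2 : V2) :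
    MultiGraph (V1 ⊕ V2) where
  E x y :=
    match x, y with
    | .inl a, .inl b => G1.E a b
    | .inr a, .inr b => G2.E a b
    | .inl a, .inr b => if a = v1 ∧ b = v2 then 1 else 0
    | .inr b, .inl a => if a = v1 ∧ b = v2 then 1 else 0
  loops := Sum.elim G1.loops G2.loops
  symm := by rintro (a | a) (b | b) <;> simp [G1.symm, G2.symm]
  noDiag := by rintro (a | a) <;> simp [G1.noDiag, G2.noDiag]

/-- The virtual loopless graph `Ḡ•` of a vertex-weighted graph `(G, ω)`:
insert a vertex into each loop of `G` and add `ω v` subdivided loops at each `v`.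
The inserted vertices are the pairs `⟨v, i⟩` with `i : Fin (G.loops v + ω v)`,
each joined to `v` by two parallel edges. -/
noncomputable def bullet (G : MultiGraph V) (ω : V → ℕ) :
    MultiGraph (V ⊕ (Σ v : V, Fin (G.loops v + ω v))) where
  E x y :=
    match x, y with
    | .inl u, .inl v => G.E u v
    | .inl u, .inr w => if u = w.1 then 2 else 0
    | .inr w, .inl u => if u = w.1 then 2 else 0
    | .inr _, .inr _ => 0
  loops := fun _ => 0
  symm := by rintro (u | u) (v | v) <;> simp [G.symm]
  noDiag := by rintro (v | v) <;> simp [G.noDiag]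

/-- The rank `r_Ḡ(d)` of a divisor on a vertex-weighted graph `(G, ω)`:
the Baker–Norine rank of `d` on `Ḡ•`. -/
noncomputable def wrank [Fintype V] [DecidableEq V] (G : MultiGraph V) (ω : V → ℕ)
    (d : V → ℤ) : ℤ :=
  (bullet G ω).rank (Sum.elim d 0)

/-- `v` is a base-point of the complete linear system `|d|•` on `Ḡ•`. -/
def wBasePoint [Fintype V] [DecidableEq V] (G : MultiGraph V) (ω : V → ℕ)
    (d : V → ℤ) (v : V) : Prop :=
  wrank G ω (d - one v) = wrank G ω d

/-- Genus of a vertex-weighted graph. -/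
def genus [Fintype V] (G : MultiGraph V) (ω : V → ℕ) : ℤ :=
  (G.edgeCount : ℤ) - Fintype.card V + 1 + ∑ v, (ω v : ℤ)

/-- A vertex-weighted graph of genus `≥ 2` is hyperelliptic if `Ḡ•` carries a
divisor of degree `2` and rank `1`. -/
def Hyperelliptic [Fintype V] [DecidableEq V] (G : MultiGraph V) (ω : V → ℕ) : Prop :=
  2 ≤ genus G ω ∧ ∃ d, deg d = 2 ∧ (bullet G ω).rank d = 1

/-- The canonical divisor `K_Ḡ` of a vertex-weighted graph, viewed as a divisor on `G`. -/
noncomputable def wK [Fintype V] (G : MultiGraph V) (ω : V → ℕ) : V → ℤ :=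
  fun v => (bullet G ω).K (Sum.inl v)

lemma deg_add [Fintype V] (a b : V → ℤ) : deg (a + b) = deg a + deg b := Finset.sum_add_distrib

lemma deg_sub [Fintype V] (a b : V → ℤ) : deg (a - b) = deg a - deg b :=
  Finset.sum_sub_distrib _ _

lemma deg_one [Fintype V] [DecidableEq V] (v : V) : deg (one v) = 1 := by simp [deg, one]

lemma effective_one [DecidableEq V] (v : V) : Effective (one v) := fun w => by
  unfold one; split_ifs <;> norm_num

lemma Effective.add {a b : V → ℤ} (ha : Effective a) (hb : Effective b) : Effective (a + b) :=
  fun v => add_nonneg (ha v) (hb v)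

lemma Effective.deg_nonneg [Fintype V] {e : V → ℤ} (he : Effective e) : 0 ≤ deg e :=
  Finset.sum_nonneg fun v _ => he v

lemma Effective.eq_zero_of_deg_eq_zero [Fintype V] {e : V → ℤ} (he : Effective e)
    (h : deg e = 0) : e = 0 :=
  funext fun v => (Finset.sum_eq_zero_iff_of_nonneg fun w _ => he w).1 h v (Finset.mem_univ v)

lemma nonempty_of_deg_ne_zero [Fintype V] {d : V → ℤ} (h : deg d ≠ 0) : Nonempty V := by
  by_contra hV
  rw [not_nonempty_iff] at hV
  exact h (Finset.sum_of_isEmpty _)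

lemma exists_effective_deg_eq [Fintype V] [Nonempty V] (n : ℕ) :
    ∃ e : V → ℤ, Effective e ∧ deg e = n := by
  classical
  obtain ⟨v⟩ := ‹Nonempty V›
  refine ⟨fun w => if w = v then (n : ℤ) else 0, fun w => ?_, by simp [deg]⟩
  dsimp only
  split_ifs <;> omega

lemma sum_sum_eq_zero_of_antisymm {α : Type*} (s : Finset α) (F : α → α → ℤ)
    (hF : ∀ x y, F y x = -F x y) : ∑ x ∈ s, ∑ y ∈ s, F x y = 0 := by
  have h : ∑ x ∈ s, ∑ y ∈ s, F x y = -∑ x ∈ s, ∑ y ∈ s, F x y := by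
    conv_lhs => rw [Finset.sum_comm]
    simp only [← Finset.sum_neg_distrib]
    exact Finset.sum_congr rfl fun x _ => Finset.sum_congr rfl fun y _ => hF x y
  linarith

section Push

variable {W : Type} [Fintype W] [DecidableEq V]

def push (π : W → V) (d : W → ℤ) : V → ℤ := fun v => ∑ x, if π x = v then d x else 0

lemma sum_mul_push [Fintype V] (g : V → ℤ) (π : W → V) (d : W → ℤ) :
    ∑ v, g v * push π d v = ∑ x, g (π x) * d x := by
  simp only [push, Finset.mul_sum, mul_ite, mul_zero]
  rw [Finset.sum_comm]
  simp

lemma deg_push [Fintype V] (π : W → V) (d : W → ℤ) : deg (push π d) = deg d := by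
  simpa [deg] using sum_mul_push 1 π d

lemma Effective.push {d : W → ℤ} (h : Effective d) (π : W → V) : Effective (push π d) :=
  fun v => Finset.sum_nonneg fun x _ => by split_ifs <;> simp [h x]

lemma push_sub (π : W → V) (a b : W → ℤ) : push π (a - b) = push π a - push π b := by
  funext v
  simp only [push, Pi.sub_apply, ← Finset.sum_sub_distrib]
  exact Finset.sum_congr rfl fun x _ => by split_ifs <;> simp

lemma push_push_of_leftInverse [Fintype V] [DecidableEq W] {ι : V → W} {ρ : W → V}
    (h : Function.LeftInverse ρ ι) (d : V → ℤ) : push ρ (push ι d) = d := by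
  funext v
  have := sum_mul_push (fun x => if ρ x = v then 1 else 0) ι d
  simp only [h _, boole_mul] at this
  simpa [push] using this

end Push

namespace MultiGraph

variable [Fintype V] (G : MultiGraph V)

lemma sum_div_eq_sum_compl [DecidableEq V] (f : V → ℤ) (A : Finset V) :
    ∑ a ∈ A, G.div f a = ∑ a ∈ A, ∑ b ∈ Aᶜ, (G.E a b : ℤ) * (f b - f a) := by
  simp only [MultiGraph.div, ← Finset.sum_add_sum_compl A (fun b => (G.E _ b : ℤ) * _),
    Finset.sum_add_distrib]
  rw [sum_sum_eq_zero_of_antisymm A _ fun x y => by rw [G.symm]; ring, zero_add]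

lemma deg_div (f : V → ℤ) : deg (G.div f) = 0 := by
  classical
  simpa [deg] using G.sum_div_eq_sum_compl f Finset.univ

lemma div_sub (f g : V → ℤ) : G.div (f - g) = G.div f - G.div g := by
  funext v
  simp only [MultiGraph.div, Pi.sub_apply, ← Finset.sum_sub_distrib]
  exact Finset.sum_congr rfl fun w _ => by ring

variable {G}

lemma Principal.deg_eq_zero {d : V → ℤ} (h : G.Principal d) : deg d = 0 := by
  obtain ⟨f, rfl⟩ := h
  exact G.deg_div f

lemma Principal.sub {a b : V → ℤ} (ha : G.Principal a) (hb : G.Principal b) :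
    G.Principal (a - b) := by
  obtain ⟨f, rfl⟩ := ha
  obtain ⟨g, rfl⟩ := hb
  exact ⟨f - g, (G.div_sub f g).symm⟩

lemma Winnable.add_effective {d e : V → ℤ} (hd : G.Winnable d) (he : Effective e) :
    G.Winnable (d + e) := by
  obtain ⟨e', he', hP⟩ := hd
  exact ⟨e' + e, he'.add he, by rwa [LinEquiv, add_sub_add_right_eq_sub]⟩

variable (G) in
def RankAtLeast (d : V → ℤ) (s : ℕ) : Prop :=
  ∀ e : V → ℤ, Effective e → deg e = s → G.Winnable (d - e)

variable (G) in
lemma rank_eq_ite (d : V → ℤ) :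
    G.rank d = if G.Winnable d then ((sSup {s | G.RankAtLeast d s} : ℕ) : ℤ) else -1 := rfl

variable {d : V → ℤ} {s : ℕ}

lemma Winnable.deg_nonneg (h : G.Winnable d) : 0 ≤ deg d := by
  obtain ⟨e, he, hP⟩ := h
  have h0 := hP.deg_eq_zero
  rw [deg_sub] at h0
  linarith [he.deg_nonneg]

lemma RankAtLeast.le_deg [Nonempty V] (h : G.RankAtLeast d s) : (s : ℤ) ≤ deg d := by
  obtain ⟨e, he, hdeg⟩ := exists_effective_deg_eq (V := V) s
  have := (h e he hdeg).deg_nonneg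
  rw [deg_sub, hdeg] at this
  linarith

lemma RankAtLeast.winnable [Nonempty V] (h : G.RankAtLeast d s) : G.Winnable d := by
  obtain ⟨e, he, hdeg⟩ := exists_effective_deg_eq (V := V) s
  simpa using (h e he hdeg).add_effective he

lemma Winnable.rankAtLeast_zero (h : G.Winnable d) : G.RankAtLeast d 0 := by
  intro e he hdeg
  rwa [he.eq_zero_of_deg_eq_zero hdeg, sub_zero]

lemma rank_eq_one_iff (hd : deg d = 2) :
    G.rank d = 1 ↔ G.RankAtLeast d 1 ∧ ¬G.RankAtLeast d 2 := by
  have : Nonempty V := nonempty_of_deg_ne_zero (d := d) (by omega)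
  have hbdd : ∀ s ∈ {s | G.RankAtLeast d s}, s ≤ 2 := fun s hs => by
    have := RankAtLeast.le_deg hs
    omega
  constructor
  · intro hrank
    by_cases hW : G.Winnable d
    · have hsSup : sSup {s | G.RankAtLeast d s} = 1 := by
        rw [rank_eq_ite, if_pos hW] at hrank
        exact_mod_cast hrank
      refine ⟨hsSup ▸ Nat.sSup_mem ⟨0, hW.rankAtLeast_zero⟩ ⟨2, hbdd⟩, fun h2 => ?_⟩
      have := le_csSup ⟨2, hbdd⟩ h2
      omega
    · rw [rank_eq_ite, if_neg hW] at hrank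
      omega
  · rintro ⟨h1, h2⟩
    have hle : ∀ s ∈ {s | G.RankAtLeast d s}, s ≤ 1 := fun s hs => by
      have := hbdd s hs
      rcases (by omega : s ≤ 1 ∨ s = 2) with h | rfl
      · exact h
      · exact absurd hs h2
    have hsSup : sSup {s | G.RankAtLeast d s} = 1 :=
      le_antisymm (csSup_le ⟨1, h1⟩ hle) (le_csSup ⟨1, hle⟩ h1)
    rw [rank_eq_ite, if_pos h1.winnable, hsSup]
    rfl

lemma RankAtLeast.principal_sub_of_deg_eq (h : G.RankAtLeast d s) (hd : deg d = s)
    {e : V → ℤ} (he : Effective e) (hde : deg e = s) : G.Principal (e - d) := by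
  obtain ⟨e', he', hP⟩ := h e he hde
  have h0 := hP.deg_eq_zero
  rw [deg_sub, deg_sub, hd, hde, sub_self, sub_zero] at h0
  rw [he'.eq_zero_of_deg_eq_zero h0] at hP
  simpa [LinEquiv] using hP

lemma RankAtLeast.principal_one_sub_one [DecidableEq V] (h : G.RankAtLeast d 2) (hd : deg d = 2)
    (u w : V) : G.Principal (one u - one w) := by
  have hdeg : ∀ a b : V, deg (one a + one b) = ((2 : ℕ) : ℤ) := fun a b => by
    rw [deg_add, deg_one, deg_one]; rfl
  have hu := h.principal_sub_of_deg_eq hd ((effective_one u).add (effective_one u)) (hdeg u u)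
  have hw := h.principal_sub_of_deg_eq hd ((effective_one w).add (effective_one u)) (hdeg w u)
  convert hu.sub hw using 1
  abel

variable (G) in
def cutSize [DecidableEq V] (A : Finset V) : ℕ := ∑ a ∈ A, ∑ b ∈ Aᶜ, G.E a b

lemma exists_cutSize_le_one_of_principal [DecidableEq V] {u w : V} (huw : u ≠ w)
    (h : G.Principal (one u - one w)) : ∃ A, w ∈ A ∧ u ∉ A ∧ G.cutSize A ≤ 1 := by
  obtain ⟨f, hf⟩ := h
  set A := Finset.univ.filter fun x => f u < f x
  have hu : u ∉ A := by simp [A]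
  have hsum : ∑ a ∈ A, G.div f a = -(if w ∈ A then 1 else 0) := by
    simp [← hf, one, Finset.sum_sub_distrib, Finset.sum_ite_eq', hu]
  have hcut : ∑ a ∈ A, G.div f a ≤ -(G.cutSize A : ℤ) := by
    rw [sum_div_eq_sum_compl, cutSize]
    push_cast
    simp only [← Finset.sum_neg_distrib]
    refine Finset.sum_le_sum fun a ha => Finset.sum_le_sum fun b hb => ?_
    simp only [A, Finset.mem_compl, Finset.mem_filter, Finset.mem_univ, true_and, not_lt] at ha hb
    nlinarith [(G.E a b).cast_nonneg (α := ℤ)]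
  -- `div f u = 1`, so `f` increases along some edge at `u`, which therefore leaves `A`.
  have hpos : 0 < G.cutSize A := by
    obtain ⟨x, hux, hx⟩ : ∃ x, 0 < G.E u x ∧ f u < f x := by
      by_contra! hno
      have hdiv : G.div f u = 1 := by simp [← hf, one, huw]
      have : G.div f u ≤ 0 := Finset.sum_nonpos fun x _ => by
        rcases (G.E u x).eq_zero_or_pos with h0 | h0
        · simp [h0]
        · nlinarith [hno x h0, (G.E u x).cast_nonneg (α := ℤ)]
      omega
    have hxA : x ∈ A := by simp [A, hx]
    calc 0 < G.E x u := by rwa [G.symm]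
      _ ≤ ∑ b ∈ Aᶜ, G.E x b :=
        Finset.single_le_sum (fun _ _ => Nat.zero_le _) (Finset.mem_compl.2 hu)
      _ ≤ G.cutSize A :=
        Finset.single_le_sum (f := fun a => ∑ b ∈ Aᶜ, G.E a b) (fun _ _ => Nat.zero_le _) hxA
  by_cases hw : w ∈ A
  · refine ⟨A, hw, hu, ?_⟩
    rw [if_pos hw] at hsum
    omega
  · rw [if_neg hw] at hsum
    omega

/-- The double sum counts every edge twice: `S` spans at most `#S - 1` edges. -/
lemma sum_sum_E_add_two_le_of_cut [DecidableEq V]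
    (hcut : ∀ u w, 0 < G.E u w → ∃ A, w ∈ A ∧ u ∉ A ∧ G.cutSize A ≤ 1)
    (S : Finset V) (hS : S.Nonempty) : ∑ a ∈ S, ∑ b ∈ S, G.E a b + 2 ≤ 2 * S.card := by
  induction S using Finset.strongInduction with
  | H S ih =>
  by_cases hedge : ∃ u ∈ S, ∃ w ∈ S, 0 < G.E u w
  · obtain ⟨u, hu, w, hw, huw⟩ := hedge
    obtain ⟨A, hwA, huA, hA⟩ := hcut u w huw
    set S1 := S.filter (· ∈ A)
    set S2 := S.filter (· ∉ A)
    have h1 := ih S1 (Finset.filter_ssubset.2 ⟨u, hu, huA⟩) ⟨w, by simp [S1, hw, hwA]⟩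
    have h2 :=
      ih S2 (Finset.filter_ssubset.2 ⟨w, hw, not_not.2 hwA⟩) ⟨u, by simp [S2, hu, huA]⟩
    have hcross : ∑ a ∈ S1, ∑ b ∈ S2, G.E a b ≤ 1 :=
      calc ∑ a ∈ S1, ∑ b ∈ S2, G.E a b ≤ ∑ a ∈ S1, ∑ b ∈ Aᶜ, G.E a b :=
            Finset.sum_le_sum fun a _ => Finset.sum_le_sum_of_subset fun x hx =>
              Finset.mem_compl.2 (Finset.mem_filter.1 hx).2
        _ ≤ G.cutSize A := Finset.sum_le_sum_of_subset fun x hx => (Finset.mem_filter.1 hx).2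
        _ ≤ 1 := hA
    have hswap : ∑ a ∈ S2, ∑ b ∈ S1, G.E a b = ∑ a ∈ S1, ∑ b ∈ S2, G.E a b := by
      rw [Finset.sum_comm]
      exact Finset.sum_congr rfl fun _ _ => Finset.sum_congr rfl fun _ _ => G.symm _ _
    have hsplit : ∀ F : V → ℕ, ∑ a ∈ S, F a = ∑ a ∈ S1, F a + ∑ a ∈ S2, F a :=
      fun F => (Finset.sum_filter_add_sum_filter_not S _ F).symm
    have hcard : S1.card + S2.card = S.card := Finset.card_filter_add_card_filter_not _
    simp only [hsplit, Finset.sum_add_distrib]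
    omega
  · have : ∑ a ∈ S, ∑ b ∈ S, G.E a b = 0 :=
      Finset.sum_eq_zero fun a ha => Finset.sum_eq_zero fun b hb =>
        Nat.eq_zero_of_not_pos fun h => hedge ⟨a, ha, b, hb, h⟩
    have := hS.card_pos
    omega

variable (G) in
lemma two_mul_sum_mul_div (g f : V → ℤ) :
    2 * ∑ x, g x * G.div f x = ∑ x, ∑ y, (G.E x y : ℤ) * (f y - f x) * (g x - g y) := by
  have h1 : ∑ x, g x * G.div f x = ∑ x, ∑ y, (G.E x y : ℤ) * (f y - f x) * g x := by
    simp only [MultiGraph.div, Finset.mul_sum]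
    exact Finset.sum_congr rfl fun x _ => Finset.sum_congr rfl fun y _ => by ring
  have h2 : ∑ x, ∑ y, (G.E x y : ℤ) * (f y - f x) * g x
      = -∑ x, ∑ y, (G.E x y : ℤ) * (f y - f x) * g y := by
    rw [Finset.sum_comm]
    simp only [← Finset.sum_neg_distrib]
    exact Finset.sum_congr rfl fun x _ => Finset.sum_congr rfl fun y _ => by rw [G.symm]; ring
  simp only [mul_sub ((G.E _ _ : ℤ) * (f _ - f _)), Finset.sum_sub_distrib]
  linarith

variable {W : Type} [Fintype W]

structure Retraction (B : MultiGraph W) (B₁ : MultiGraph V) where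
  incl : V → W
  retr : W → V
  retr_incl : Function.LeftInverse retr incl
  E_incl : ∀ u v, B.E (incl u) (incl v) = B₁.E u v
  incl_retr_of_E : ∀ x y, B.E x y ≠ 0 → retr x ≠ retr y → incl (retr x) = x

namespace Retraction

variable {B : MultiGraph W} {B₁ : MultiGraph V} (R : B.Retraction B₁)

lemma sum_mul_div (g : V → ℤ) (f : W → ℤ) :
    ∑ x, g (R.retr x) * B.div f x = ∑ v, g v * B₁.div (f ∘ R.incl) v := by
  set F : W → W → ℤ :=
    fun x y => (B.E x y : ℤ) * (f y - f x) * (g (R.retr x) - g (R.retr y))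
  have hF : ∀ x y, F x y ≠ 0 → R.incl (R.retr x) = x ∧ R.incl (R.retr y) = y := by
    intro x y hxy
    have hE : B.E x y ≠ 0 := fun h => hxy (by simp [F, h])
    have hρ : R.retr x ≠ R.retr y := fun h => hxy (by simp [F, h])
    exact ⟨R.incl_retr_of_E x y hE hρ, R.incl_retr_of_E y x (B.symm x y ▸ hE) hρ.symm⟩
  have hinj := R.retr_incl.injective
  have hsum : ∑ x, ∑ y, F x y = ∑ u, ∑ v, F (R.incl u) (R.incl v) :=
    calc ∑ x, ∑ y, F x y = ∑ u, ∑ y, F (R.incl u) y :=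
          (Fintype.sum_of_injective R.incl hinj _ _ (fun x hx => Finset.sum_eq_zero fun y _ =>
            by_contra fun h => hx ⟨_, (hF x y h).1⟩) fun u => rfl).symm
      _ = ∑ u, ∑ v, F (R.incl u) (R.incl v) := Finset.sum_congr rfl fun u _ =>
          (Fintype.sum_of_injective R.incl hinj _ _ (fun y hy =>
            by_contra fun h => hy ⟨_, (hF _ y h).2⟩) fun v => rfl).symm
  apply mul_left_cancel₀ (two_ne_zero (α := ℤ))
  rw [two_mul_sum_mul_div, two_mul_sum_mul_div]
  refine hsum.trans (Finset.sum_congr rfl fun u _ => Finset.sum_congr rfl fun v _ => ?_)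
  simp [F, R.E_incl, R.retr_incl u, R.retr_incl v]

variable [DecidableEq V]

lemma push_div (f : W → ℤ) : push R.retr (B.div f) = B₁.div (f ∘ R.incl) := by
  funext v
  simpa [push] using R.sum_mul_div (fun u => if u = v then 1 else 0) f

lemma winnable_push {d : W → ℤ} (h : B.Winnable d) : B₁.Winnable (push R.retr d) := by
  obtain ⟨e, he, f, hf⟩ := h
  exact ⟨push R.retr e, he.push _, f ∘ R.incl, by rw [← push_sub, hf, R.push_div]⟩

lemma rankAtLeast_push [DecidableEq W] {d : W → ℤ} {s : ℕ} (h : B.RankAtLeast d s) :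
    B₁.RankAtLeast (push R.retr d) s := by
  intro e he hdeg
  have := R.winnable_push (h (push R.incl e) (he.push _) ((deg_push _ e).trans hdeg))
  rwa [push_sub, push_push_of_leftInverse R.retr_incl] at this

end Retraction

end MultiGraph

section Bullet

variable [Fintype V] (G : MultiGraph V) (ω : V → ℕ)

lemma card_bullet_vertices : Fintype.card (V ⊕ Σ v, Fin (G.loops v + ω v))
    = Fintype.card V + ∑ v, (G.loops v + ω v) := by
  simp

lemma sum_sum_bullet_E : ∑ x, ∑ y, (bullet G ω).E x y
    = ∑ u, ∑ v, G.E u v + 4 * ∑ v, (G.loops v + ω v) := by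
  simp only [bullet, Fintype.sum_sum_type, Finset.sum_add_distrib]
  rw [Finset.sum_comm (s := Finset.univ)
    (t := (Finset.univ : Finset (Σ v, Fin (G.loops v + ω v))))]
  simp [← Finset.sum_add_distrib]
  ring

lemma genus_le_zero_of_forall_principal [DecidableEq V] [Nonempty V]
    (h : ∀ x y, (bullet G ω).Principal (one x - one y)) : genus G ω ≤ 0 := by
  have hcut : ∀ x y, 0 < (bullet G ω).E x y →
      ∃ A, y ∈ A ∧ x ∉ A ∧ (bullet G ω).cutSize A ≤ 1 := fun x y hxy =>
    exists_cutSize_le_one_of_principal (fun h => by simp [h, (bullet G ω).noDiag] at hxy) (h x y)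
  have hforest := sum_sum_E_add_two_le_of_cut hcut Finset.univ Finset.univ_nonempty
  rw [sum_sum_bullet_E, Finset.card_univ, card_bullet_vertices] at hforest
  have hsum := Finset.sum_add_distrib (s := Finset.univ) (f := G.loops) (g := ω)
  have hω : ∑ v, (ω v : ℤ) = ((∑ v, ω v : ℕ) : ℤ) := by push_cast; rfl
  rw [genus, edgeCount, hω]
  omega

end Bullet

lemma hyperelliptic_or_genus_le_one_of_retraction {W : Type} [Fintype W] [DecidableEq W]
    [Fintype V] [DecidableEq V] [Nonempty V] {G : MultiGraph V} {ω : V → ℕ} {B : MultiGraph W}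
    (R : B.Retraction (bullet G ω)) {d : W → ℤ} (hdeg : deg d = 2) (hrank : B.rank d = 1) :
    Hyperelliptic G ω ∨ genus G ω ≤ 1 := by
  rw [or_iff_not_imp_right, not_le]
  intro hgenus
  have hdeg₁ : deg (push R.retr d) = 2 := (deg_push _ d).trans hdeg
  have hrank₁ := R.rankAtLeast_push ((rank_eq_one_iff hdeg).1 hrank).1
  refine ⟨by omega, push R.retr d, hdeg₁,
    (rank_eq_one_iff hdeg₁).2 ⟨hrank₁, fun h2 => ?_⟩⟩
  have := genus_le_zero_of_forall_principal G ω (h2.principal_one_sub_one hdeg₁)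
  omega

section BridgeJoin

variable [Fintype V1] [DecidableEq V1] [Fintype V2] [DecidableEq V2] (G1 : MultiGraph V1)
  (G2 : MultiGraph V2) (ω1 : V1 → ℕ) (ω2 : V2 → ℕ) (v1 : V1) (v2 : V2)

def bridgeJoinRetractionLeft :
    (bullet (bridgeJoin G1 G2 v1 v2) (Sum.elim ω1 ω2)).Retraction (bullet G1 ω1) where
  incl := Sum.elim (fun v => .inl (.inl v)) fun s => .inr ⟨.inl s.1, s.2⟩
  retr
    | .inl (.inl v) => .inl v
    | .inr ⟨.inl v, i⟩ => .inr ⟨v, i⟩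
    | _ => .inl v1
  retr_incl := by rintro (v | ⟨v, i⟩) <;> rfl
  E_incl := by rintro (u | ⟨u, i⟩) (v | ⟨v, j⟩) <;> simp [bullet, bridgeJoin]
  incl_retr_of_E := by
    rintro ((a | a) | ⟨(a | a), i⟩) ((b | b) | ⟨(b | b), j⟩) hE hρ <;>
      simp_all [bullet, bridgeJoin]

def bridgeJoinRetractionRight :
    (bullet (bridgeJoin G1 G2 v1 v2) (Sum.elim ω1 ω2)).Retraction (bullet G2 ω2) where
  incl := Sum.elim (fun v => .inl (.inr v)) fun s => .inr ⟨.inr s.1, s.2⟩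
  retr
    | .inl (.inr v) => .inl v
    | .inr ⟨.inr v, i⟩ => .inr ⟨v, i⟩
    | _ => .inl v2
  retr_incl := by rintro (v | ⟨v, i⟩) <;> rfl
  E_incl := by rintro (u | ⟨u, i⟩) (v | ⟨v, j⟩) <;> simp [bullet, bridgeJoin]
  incl_retr_of_E := by
    rintro ((a | a) | ⟨(a | a), i⟩) ((b | b) | ⟨(b | b), j⟩) hE hρ <;>
      simp_all [bullet, bridgeJoin]

end BridgeJoin

theorem statement_14_general {V1 V2 : Type} [Fintype V1] [DecidableEq V1] [Fintype V2] [DecidableEq V2]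
    (G1 : MultiGraph V1) (G2 : MultiGraph V2)
    (ω1 : V1 → ℕ) (ω2 : V2 → ℕ) (v1 : V1) (v2 : V2)
    (hhyp : Hyperelliptic (bridgeJoin G1 G2 v1 v2) (Sum.elim ω1 ω2)) :
    (Hyperelliptic G1 ω1 ∨ genus G1 ω1 ≤ 1) ∧
    (Hyperelliptic G2 ω2 ∨ genus G2 ω2 ≤ 1) := by
  obtain ⟨-, d, hdeg, hrank⟩ := hhyp
  have : Nonempty V1 := ⟨v1⟩
  have : Nonempty V2 := ⟨v2⟩
  exact ⟨hyperelliptic_or_genus_le_one_of_retraction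
      (bridgeJoinRetractionLeft G1 G2 ω1 ω2 v1 v2) hdeg hrank,
    hyperelliptic_or_genus_le_one_of_retraction
      (bridgeJoinRetractionRight G1 G2 ω1 ω2 v1 v2) hdeg hrank⟩

/-- components of a hyperelliptic graph across a bridge are
hyperelliptic or of genus at most 1. -/
theorem statement_14 {V1 V2 : Type} [Fintype V1] [DecidableEq V1] [Fintype V2] [DecidableEq V2]
    (G1 : MultiGraph V1) (G2 : MultiGraph V2)
    (hc1 : G1.Connected) (hc2 : G2.Connected)
    (ω1 : V1 → ℕ) (ω2 : V2 → ℕ) (v1 : V1) (v2 : V2)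
    (hg : 2 ≤ genus (bridgeJoin G1 G2 v1 v2) (Sum.elim ω1 ω2))
    (hhyp : Hyperelliptic (bridgeJoin G1 G2 v1 v2) (Sum.elim ω1 ω2)) :
    (Hyperelliptic G1 ω1 ∨ genus G1 ω1 ≤ 1) ∧
    (Hyperelliptic G2 ω2 ∨ genus G2 ω2 ≤ 1) :=
  statement_14_general G1 G2 ω1 ω2 v1 v2 hhyp

end BN
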